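/- Let a_{i,j,k,l}, 1 ≤ i,j,k,l ≤ n, be real numbers with a_{i,j,k,l} = 0 if i = j or k = l, Σ a_{i,j,k,l} = 0, a_{i,j,k,l} = a_{i,j,l,k} = a_{j,i,l,k}, and sup |a_{i,j,k,l}| ≤ b. Let π be uniform on S_n, V₁ = Σ_{s≠t} a_{s,t,π(s),π(t)}, and W₁ = n^{−3/2}V₁. Then for all t > 0, P(W₁ ≥ t) ≤ exp(−t²/(2φ_{b,n})) and P(W₁ ≤ −t) ≤ exp(−t²/(2φ_{b,n})), where φ_{b,n} = 8(2n−1)b²(6 + 4/n + 1/n²)/n. -/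

import Mathlib

/-!
Chatterjee's exchangeable-pair method. Let the `σ τ` be involutions of a finite set and `F` be
antisymmetric with `∑ τ, F p (σ τ p) = f p`. Substituting `p ↦ σ τ p` and using
`|eˣ - eʸ| ≤ |x - y| (eˣ + eʸ)` bounds the derivative of `m θ = ∑ p, exp (θ f p)` by
`θ K m θ`, where `K` bounds `∑ τ, |f p - f (σ τ p)| |F p (σ τ p)|`. Hence
`m θ ≤ m 0 exp (K θ² / 2)`, and Chernoff's bound gives the tail `exp (-t² / (2K))`.

For `V₁` take `σ (i, j) π = π * swap i j`. With `U π = ∑ s t k, a s t k (π t)`, one has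
`∑ i j, V₁ (π * swap i j) = (n - 2)² V₁ π + 4 U π` and `∑ i j, U (π * swap i j) = n (n - 2) U π`.
So `F = (n/4 ΔV₁ + ΔU/2) / (n (n - 1))` works. One transposition changes `V₁` by at most `8 n b`
and `U` by at most `4 n² b`. After the scaling by `n^{-3/2}` this gives `K = 64 b² ≤ φ_{b,n}`.
-/

open Finset

open scoped Classical

open Real Equiv

theorem exp_sub_exp_le_mul_exp (x y : ℝ) : exp x - exp y ≤ (x - y) * exp x := by
  have h := add_one_le_exp (y - x)
  have hmul : exp (y - x) * exp x = exp y := by rw [← exp_add, sub_add_cancel]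
  nlinarith [exp_pos x]

theorem abs_exp_sub_exp_le (x y : ℝ) : |exp x - exp y| ≤ |x - y| * (exp x + exp y) := by
  have hx := exp_sub_exp_le_mul_exp x y
  have hy := exp_sub_exp_le_mul_exp y x
  have hxy : (x - y) * exp x ≤ |x - y| * exp x := by gcongr; exact le_abs_self _
  have hyx : (y - x) * exp y ≤ |x - y| * exp y := by gcongr; exact neg_sub x y ▸ neg_le_abs _
  rw [abs_le]
  constructor <;> nlinarith [exp_pos x, exp_pos y, abs_nonneg (x - y)]

theorem le_mul_exp_of_hasDerivAt_le {m m' : ℝ → ℝ} {K : ℝ} (hm : ∀ θ, HasDerivAt m (m' θ) θ)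
    (hle : ∀ θ, 0 ≤ θ → m' θ ≤ K * θ * m θ) {θ : ℝ} (hθ : 0 ≤ θ) :
    m θ ≤ m 0 * exp (K * θ ^ 2 / 2) := by
  set g : ℝ → ℝ := fun x => m x * exp (-(K * x ^ 2 / 2))
  have hg : ∀ x, HasDerivAt g ((m' x - K * x * m x) * exp (-(K * x ^ 2 / 2))) x := fun x => by
    have hq : HasDerivAt (fun y : ℝ => -(K * y ^ 2 / 2)) (-(K * x)) x :=
      (((hasDerivAt_pow 2 x).const_mul K).div_const 2).fun_neg.congr_deriv (by push_cast; ring)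
    exact ((hm x).mul hq.exp).congr_deriv (by ring)
  have hanti : AntitoneOn g (Set.Ici 0) := by
    refine antitoneOn_of_hasDerivWithinAt_nonpos (convex_Ici 0)
      (fun x _ => (hg x).continuousAt.continuousWithinAt) (fun x _ => (hg x).hasDerivWithinAt)
      fun x hx => ?_
    rw [interior_Ici] at hx
    exact mul_nonpos_of_nonpos_of_nonneg (sub_nonpos.2 (hle x (le_of_lt hx))) (exp_pos _).le
  have hg0 : g θ ≤ m 0 := by simpa [g] using hanti Set.self_mem_Ici hθ hθ
  calc m θ = g θ * exp (K * θ ^ 2 / 2) := by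
        simp only [g]; rw [mul_assoc, ← exp_add, neg_add_cancel, exp_zero, mul_one]
    _ ≤ m 0 * exp (K * θ ^ 2 / 2) := by gcongr

theorem card_filter_mul_exp_le_sum_exp {α : Type*} [Fintype α] (f : α → ℝ) {t θ : ℝ} (hθ : 0 ≤ θ) :
    ((univ.filter fun p => t ≤ f p).card : ℝ) * exp (θ * t) ≤ ∑ p, exp (θ * f p) := by
  calc ((univ.filter fun p => t ≤ f p).card : ℝ) * exp (θ * t)
      = ∑ _p ∈ univ.filter fun p => t ≤ f p, exp (θ * t) := by rw [sum_const, nsmul_eq_mul]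
    _ ≤ ∑ p ∈ univ.filter fun p => t ≤ f p, exp (θ * f p) :=
        sum_le_sum fun p hp => exp_le_exp.2 (mul_le_mul_of_nonneg_left (mem_filter.1 hp).2 hθ)
    _ ≤ ∑ p, exp (θ * f p) :=
        sum_le_sum_of_subset_of_nonneg (filter_subset _ _) fun _ _ _ => (exp_pos _).le

section ExchangeablePair

variable {α ι : Type*} [Fintype α] [Fintype ι] {σ : ι → α → α}

theorem sum_sum_comp_involutive (hσ : ∀ τ, Function.Involutive (σ τ)) (G : α → α → ℝ) :
    ∑ τ, ∑ p, G p (σ τ p) = ∑ τ, ∑ p, G (σ τ p) p := by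
  refine sum_congr rfl fun τ _ => ?_
  conv_lhs => rw [← Equiv.sum_comp ((hσ τ).toPerm _)]
  simp [hσ τ _]

/-- Stein's identity `E[f(X) g(X)] = E[F(X, X') (g(X) - g(X'))] / 2` for the pair `(p, σ τ p)`. -/
theorem two_mul_sum_mul_eq_of_exchangeable (hσ : ∀ τ, Function.Involutive (σ τ)) {f : α → ℝ}
    {F : α → α → ℝ} (hF_anti : ∀ p q, F q p = -F p q) (hF : ∀ p, ∑ τ, F p (σ τ p) = f p)
    (g : α → ℝ) :
    2 * ∑ p, f p * g p = ∑ τ, ∑ p, F p (σ τ p) * (g p - g (σ τ p)) := by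
  have hT : ∑ p, f p * g p = ∑ τ, ∑ p, F p (σ τ p) * g p := by
    rw [sum_comm]
    simp only [← sum_mul, hF]
  have hT' : ∑ τ, ∑ p, F p (σ τ p) * g p = -∑ τ, ∑ p, F p (σ τ p) * g (σ τ p) := by
    rw [sum_sum_comp_involutive hσ fun p q => F p q * g p]
    simp only [fun τ p => hF_anti p (σ τ p), neg_mul, sum_neg_distrib]
  rw [hT, two_mul]
  nth_rw 2 [hT']
  simp only [mul_sub, sum_sub_distrib]
  ring

theorem sum_mul_exp_le_of_exchangeable (hσ : ∀ τ, Function.Involutive (σ τ)) {f : α → ℝ}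
    {F : α → α → ℝ} (hF_anti : ∀ p q, F q p = -F p q) (hF : ∀ p, ∑ τ, F p (σ τ p) = f p)
    {K : ℝ} (hK : ∀ p, ∑ τ, |f p - f (σ τ p)| * |F p (σ τ p)| ≤ K) {θ : ℝ} (hθ : 0 ≤ θ) :
    ∑ p, f p * exp (θ * f p) ≤ θ * K * ∑ p, exp (θ * f p) := by
  set e : α → ℝ := fun p => exp (θ * f p)
  set v : α → α → ℝ := fun p q => |f p - f q| * |F p q|
  have hv : ∑ τ, ∑ p, v p (σ τ p) * e (σ τ p) = ∑ τ, ∑ p, v p (σ τ p) * e p := by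
    rw [sum_sum_comp_involutive hσ fun p q => v p q * e q]
    simp only [v, abs_sub_comm (f (σ _ _)), hF_anti (σ _ _), abs_neg]
  have hpair : ∀ τ p, F p (σ τ p) * (e p - e (σ τ p))
      ≤ θ * (v p (σ τ p) * e p + v p (σ τ p) * e (σ τ p)) := fun τ p => by
    calc F p (σ τ p) * (e p - e (σ τ p)) ≤ |F p (σ τ p)| * |e p - e (σ τ p)| := by
          rw [← abs_mul]; exact le_abs_self _
      _ ≤ |F p (σ τ p)| * (|θ * f p - θ * f (σ τ p)| * (e p + e (σ τ p))) := by
          gcongr; exact abs_exp_sub_exp_le _ _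
      _ = _ := by rw [← mul_sub, abs_mul, abs_of_nonneg hθ]; ring
  have h2 : 2 * ∑ p, f p * e p ≤ 2 * (θ * K * ∑ p, e p) := by
    calc 2 * ∑ p, f p * e p = ∑ τ, ∑ p, F p (σ τ p) * (e p - e (σ τ p)) :=
          two_mul_sum_mul_eq_of_exchangeable hσ hF_anti hF e
      _ ≤ ∑ τ, ∑ p, θ * (v p (σ τ p) * e p + v p (σ τ p) * e (σ τ p)) :=
          sum_le_sum fun τ _ => sum_le_sum fun p _ => hpair τ p
      _ = θ * (2 * ∑ τ, ∑ p, v p (σ τ p) * e p) := by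
          simp only [← mul_sum, sum_add_distrib, hv]; ring
      _ = 2 * θ * ∑ p, e p * ∑ τ, v p (σ τ p) := by
          simp only [mul_sum]
          rw [sum_comm]
          exact sum_congr rfl fun _ _ => sum_congr rfl fun _ _ => by ring
      _ ≤ 2 * θ * ∑ p, e p * K := by
          gcongr with p
          exact hK p
      _ = 2 * (θ * K * ∑ p, e p) := by rw [← sum_mul]; ring
  linarith

theorem upper_tail_le_of_exchangeable [Nonempty α] (hσ : ∀ τ, Function.Involutive (σ τ))
    {f : α → ℝ} {F : α → α → ℝ} (hF_anti : ∀ p q, F q p = -F p q)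
    (hF : ∀ p, ∑ τ, F p (σ τ p) = f p) {K : ℝ}
    (hK : ∀ p, ∑ τ, |f p - f (σ τ p)| * |F p (σ τ p)| ≤ K) {t : ℝ} (ht : 0 ≤ t) :
    ((univ.filter fun p => t ≤ f p).card : ℝ) / Fintype.card α ≤ exp (-(t ^ 2 / (2 * K))) := by
  obtain ⟨p₀⟩ := ‹Nonempty α›
  have hK₀ : 0 ≤ K := (sum_nonneg fun τ _ => by positivity).trans (hK p₀)
  set θ := t / K
  have hθ : 0 ≤ θ := div_nonneg ht hK₀
  have hmgf : ∑ p, exp (θ * f p) ≤ Fintype.card α * exp (K * θ ^ 2 / 2) := by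
    have hm : ∀ x, HasDerivAt (fun y => ∑ p, exp (y * f p)) (∑ p, f p * exp (x * f p)) x :=
      fun x => HasDerivAt.fun_sum fun p _ =>
        ((hasDerivAt_mul_const (f p)).exp).congr_deriv (mul_comm _ _)
    simpa using le_mul_exp_of_hasDerivAt_le hm (fun x hx =>
      (sum_mul_exp_le_of_exchangeable hσ hF_anti hF hK hx).trans_eq (by ring)) hθ
  -- `θ = t / K` is the optimal Chernoff parameter; for `K = 0` both sides vanish
  have hexp : K * θ ^ 2 / 2 - θ * t = -(t ^ 2 / (2 * K)) := by
    rcases eq_or_ne K 0 with hK0 | hK0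
    · simp [θ, hK0]
    · simp only [θ]; field_simp; ring
  refine div_le_of_le_mul₀ (Nat.cast_nonneg _) (exp_pos _).le ?_
  rw [← hexp, exp_sub, div_mul_eq_mul_div, le_div_iff₀ (exp_pos _)]
  calc _ ≤ ∑ p, exp (θ * f p) := card_filter_mul_exp_le_sum_exp f hθ
    _ ≤ _ := by linarith

theorem tails_le_of_exchangeable [Nonempty α] (hσ : ∀ τ, Function.Involutive (σ τ))
    {f : α → ℝ} {F : α → α → ℝ} (hF_anti : ∀ p q, F q p = -F p q)
    (hF : ∀ p, ∑ τ, F p (σ τ p) = f p) {K : ℝ}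
    (hK : ∀ p, ∑ τ, |f p - f (σ τ p)| * |F p (σ τ p)| ≤ K) {t : ℝ} (ht : 0 ≤ t) :
    ((univ.filter fun p => t ≤ f p).card : ℝ) / Fintype.card α ≤ exp (-(t ^ 2 / (2 * K))) ∧
      ((univ.filter fun p => f p ≤ -t).card : ℝ) / Fintype.card α ≤
        exp (-(t ^ 2 / (2 * K))) := by
  refine ⟨upper_tail_le_of_exchangeable hσ hF_anti hF hK ht, ?_⟩
  have hneg := upper_tail_le_of_exchangeable (f := fun p => -f p) (F := fun p q => -F p q) hσ
    (fun p q => by rw [hF_anti]) (fun p => by rw [sum_neg_distrib, hF])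
    (fun p => by simpa only [← neg_sub', neg_sub_neg, abs_neg, abs_sub_comm] using hK p) ht
  simpa only [le_neg] using hneg

end ExchangeablePair

section Transpositions

variable {ι R : Type*} [Fintype ι] [DecidableEq ι] [CommRing R]

theorem sum_sum_swap_apply (h : ι → R) (s : ι) :
    ∑ i, ∑ j, h (swap i j s) = 2 * ∑ u, h u + Fintype.card ι * (Fintype.card ι - 2) * h s := by
  have key : ∀ i j, h (swap i j s) =
      h s + (if s = i then h j - h s else 0) + (if s = j then h i - h s else 0) := by
    intro i j
    rw [swap_apply_def]
    split_ifs <;> subst_vars <;> ring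
  simp [key, sum_add_distrib, sum_ite_irrel]
  ring

theorem sum_sum_swap_apply_swap_apply (h : ι → ι → R) {s t : ι} (hst : s ≠ t) :
    ∑ i, ∑ j, h (swap i j s) (swap i j t) = 2 * ∑ u, h u t + 2 * ∑ u, h s u
      + ((Fintype.card ι : R) ^ 2 - 4 * Fintype.card ι + 2) * h s t
      + 2 * (h t s - h t t - h s s) := by
  set E := h t s - h t t - h s s + h s t
  -- only the two transpositions `(s t)`, `(t s)` move both points
  have key : ∀ i j, h (swap i j s) (swap i j t) = h (swap i j s) t + h s (swap i j t) - h s t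
      + (if s = i then if t = j then E else 0 else 0)
      + (if t = i then if s = j then E else 0 else 0) := by
    intro i j
    simp only [swap_apply_def]
    split_ifs <;> subst_vars <;> first | exact absurd rfl hst | ring
  have h₁ := sum_sum_swap_apply (fun u => h u t) s
  have h₂ := sum_sum_swap_apply (fun u => h s u) t
  rw [sum_congr rfl fun i _ => sum_congr rfl fun j _ => key i j]
  simp only [sum_add_distrib, sum_sub_distrib, h₁, h₂]
  simp [sum_ite_irrel, E]
  ring

theorem sum_le_add_of_eq_zero_of_ne {d : ι → ℝ} (hd : ∀ s, 0 ≤ d s) {i j : ι}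
    (h : ∀ s, s ≠ i → s ≠ j → d s = 0) : ∑ s, d s ≤ d i + d j := by
  rw [← sum_subset (subset_univ {i, j}) fun s _ hs => h s (by simp_all) (by simp_all)]
  rcases eq_or_ne i j with rfl | hij
  · simpa using hd i
  · rw [sum_pair hij]

end Transpositions

theorem sum_sum_sum_sum_comm {β γ M : Type*} [Fintype β] [Fintype γ] [AddCommMonoid M]
    (f : β → β → γ → γ → M) :
    ∑ i, ∑ j, ∑ s, ∑ t, f i j s t = ∑ s, ∑ t, ∑ i, ∑ j, f i j s t := by
  calc _ = ∑ x : β × β, ∑ y : γ × γ, f x.1 x.2 y.1 y.2 := by simp only [Fintype.sum_prod_type]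
    _ = ∑ y : γ × γ, ∑ x : β × β, f x.1 x.2 y.1 y.2 := sum_comm
    _ = _ := by simp only [Fintype.sum_prod_type]

section DoublyIndexed

variable {n : ℕ} (a : Fin n → Fin n → Fin n → Fin n → ℝ)

noncomputable def dipStat (p : Perm (Fin n)) : ℝ :=
  ∑ s, ∑ t, a s t (p s) (p t)

noncomputable def dipMarginal (p : Perm (Fin n)) : ℝ :=
  ∑ s, ∑ t, ∑ k, a s t k (p t)

/-- Chatterjee's antisymmetric function for the pair `(π, π * swap i j)` with `(i, j)` uniform
on `Fin n × Fin n`; the `dipMarginal` term cancels the remainder of the linearity condition. -/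
noncomputable def dipAntisymm (p q : Perm (Fin n)) : ℝ :=
  (n / 4 * (dipStat a p - dipStat a q) + (dipMarginal a p - dipMarginal a q) / 2) / (n * (n - 1))

variable {a}

theorem dipStat_eq_sum_sdiff (hdiag : ∀ i k l, a i i k l = 0) (p : Perm (Fin n)) :
    dipStat a p = ∑ s, ∑ t ∈ univ \ {s}, a s t (p s) (p t) :=
  sum_congr rfl fun s _ => by
    rw [sdiff_singleton_eq_erase, sum_erase univ (f := fun t => a s t (p s) (p t)) (hdiag s _ _)]

theorem dipStat_eq_zero_of_le_one (hdiag : ∀ i k l, a i i k l = 0) (hn : n ≤ 1)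
    (p : Perm (Fin n)) : dipStat a p = 0 := by
  have := Fin.subsingleton_iff_le_one.2 hn
  exact sum_eq_zero fun s _ => sum_eq_zero fun t _ => Subsingleton.elim s t ▸ hdiag _ _ _

theorem sum_sum_dipStat_mul_swap (hdiag : ∀ i k l, a i i k l = 0)
    (hdiag' : ∀ i j k, a i j k k = 0)
    (hsymm : ∀ i j k l, a i j k l = a i j l k ∧ a i j k l = a j i l k) (p : Perm (Fin n)) :
    ∑ i, ∑ j, dipStat a (p * swap i j) = (n - 2) ^ 2 * dipStat a p + 4 * dipMarginal a p := by
  have hpair : ∀ s t, ∑ i, ∑ j, a s t (p (swap i j s)) (p (swap i j t)) = (n - 2) ^ 2 *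
      a s t (p s) (p t) + 2 * ∑ k, a s t k (p t) + 2 * ∑ k, a t s k (p s) := by
    intro s t
    rcases eq_or_ne s t with rfl | hst
    · simp [hdiag]
    rw [sum_sum_swap_apply_swap_apply (fun u v => a s t (p u) (p v)) hst,
      Equiv.sum_comp p fun k => a s t k (p t), Equiv.sum_comp p fun k => a s t (p s) k,
      ← (hsymm s t (p s) (p t)).1, hdiag', hdiag', Fintype.card_fin]
    simp only [fun k => (hsymm s t (p s) k).2]
    ring
  simp only [dipStat, dipMarginal, Perm.mul_apply]
  rw [sum_sum_sum_sum_comm]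
  simp only [hpair, sum_add_distrib, ← mul_sum]
  rw [sum_comm (f := fun s t => ∑ k, a t s k (p s))]
  ring

theorem sum_sum_dipMarginal_mul_swap (hsum : ∑ i, ∑ j, ∑ k, ∑ l, a i j k l = 0)
    (p : Perm (Fin n)) :
    ∑ i, ∑ j, dipMarginal a (p * swap i j) = n * (n - 2) * dipMarginal a p := by
  have hpair : ∀ s t, ∑ i, ∑ j, ∑ k, a s t k (p (swap i j t))
      = 2 * ∑ k, ∑ l, a s t k l + n * (n - 2) * ∑ k, a s t k (p t) := by
    intro s t
    rw [sum_sum_swap_apply (fun u => ∑ k, a s t k (p u)) t,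
      Equiv.sum_comp p fun l => ∑ k, a s t k l, sum_comm (f := fun l k => a s t k l),
      Fintype.card_fin]
  simp only [dipMarginal, Perm.mul_apply]
  rw [sum_sum_sum_sum_comm]
  simp only [hpair, sum_add_distrib, ← mul_sum, hsum]
  ring

theorem dipAntisymm_comm (p q : Perm (Fin n)) : dipAntisymm a q p = -dipAntisymm a p q := by
  simp only [dipAntisymm]; ring

theorem sum_sum_dipAntisymm_mul_swap (hdiag : ∀ i k l, a i i k l = 0)
    (hdiag' : ∀ i j k, a i j k k = 0)
    (hsymm : ∀ i j k l, a i j k l = a i j l k ∧ a i j k l = a j i l k)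
    (hsum : ∑ i, ∑ j, ∑ k, ∑ l, a i j k l = 0) (hn : 2 ≤ n) (p : Perm (Fin n)) :
    ∑ i, ∑ j, dipAntisymm a p (p * swap i j) = dipStat a p := by
  have hn' : (2 : ℝ) ≤ n := by exact_mod_cast hn
  have hn₀ : (n : ℝ) ≠ 0 := by positivity
  have hn₁ : (n : ℝ) - 1 ≠ 0 := by linarith
  simp only [dipAntisymm, ← sum_div, sum_add_distrib, ← mul_sum, sum_sub_distrib, sum_const,
    card_univ, Fintype.card_fin, nsmul_eq_mul, sum_sum_dipStat_mul_swap hdiag hdiag' hsymm,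
    sum_sum_dipMarginal_mul_swap hsum]
  field_simp
  ring

theorem abs_dipStat_sub_mul_swap_le {b : ℝ} (hb : ∀ i j k l, |a i j k l| ≤ b)
    (p : Perm (Fin n)) (i j : Fin n) :
    |dipStat a p - dipStat a (p * swap i j)| ≤ 8 * n * b := by
  set τ := swap i j
  have hτ : ∀ s, s ≠ i → s ≠ j → τ s = s := fun s => swap_apply_of_ne_of_ne
  have h2b : ∀ s t k l k' l', |a s t k l - a s t k' l'| ≤ 2 * b := fun s t k l k' l' =>
    (abs_sub _ _).trans (by linarith [hb s t k l, hb s t k' l'])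
  -- move the first argument, then the second; each move changes only the terms at `i` and `j`
  set D₁ : Fin n → Fin n → ℝ := fun s t => a s t (p s) (p t) - a s t (p (τ s)) (p t)
  set D₂ : Fin n → Fin n → ℝ := fun s t => a s t (p (τ s)) (p t) - a s t (p (τ s)) (p (τ t))
  have hD₁ : ∀ t, ∑ s, |D₁ s t| ≤ 4 * b := fun t => by
    refine (sum_le_add_of_eq_zero_of_ne (i := i) (j := j) (fun _ => abs_nonneg _)
      fun s hi hj => by simp [D₁, hτ s hi hj]).trans ?_
    linarith [h2b i t (p i) (p t) (p (τ i)) (p t), h2b j t (p j) (p t) (p (τ j)) (p t)]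
  have hD₂ : ∀ s, ∑ t, |D₂ s t| ≤ 4 * b := fun s => by
    refine (sum_le_add_of_eq_zero_of_ne (i := i) (j := j) (fun _ => abs_nonneg _)
      fun t hi hj => by simp [D₂, hτ t hi hj]).trans ?_
    linarith [h2b s i (p (τ s)) (p i) (p (τ s)) (p (τ i)),
      h2b s j (p (τ s)) (p j) (p (τ s)) (p (τ j))]
  calc |dipStat a p - dipStat a (p * τ)| = |∑ s, ∑ t, (D₁ s t + D₂ s t)| := by
        simp only [dipStat, D₁, D₂, Perm.mul_apply, ← sum_sub_distrib, sub_add_sub_cancel]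
    _ ≤ ∑ s, ∑ t, (|D₁ s t| + |D₂ s t|) := (abs_sum_le_sum_abs _ _).trans <|
        sum_le_sum fun s _ => (abs_sum_le_sum_abs _ _).trans <|
          sum_le_sum fun t _ => abs_add_le _ _
    _ = ∑ t, ∑ s, |D₁ s t| + ∑ s, ∑ t, |D₂ s t| := by
        simp only [sum_add_distrib]
        exact congrArg (· + _) sum_comm
    _ ≤ ∑ _t : Fin n, 4 * b + ∑ _s : Fin n, 4 * b :=
        add_le_add (sum_le_sum fun t _ => hD₁ t) (sum_le_sum fun s _ => hD₂ s)
    _ = 8 * n * b := by simp; ring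

theorem abs_dipMarginal_sub_mul_swap_le {b : ℝ} (hb : ∀ i j k l, |a i j k l| ≤ b)
    (p : Perm (Fin n)) (i j : Fin n) :
    |dipMarginal a p - dipMarginal a (p * swap i j)| ≤ 4 * n ^ 2 * b := by
  have hcol : ∀ s t l, |∑ k, a s t k l| ≤ n * b := fun s t l =>
    (abs_sum_le_sum_abs _ _).trans ((sum_le_sum fun k _ => hb s t k l).trans_eq (by simp))
  have h2 : ∀ s t l l', |∑ k, a s t k l - ∑ k, a s t k l'| ≤ 2 * (n * b) := fun s t l l' =>
    (abs_sub _ _).trans (by linarith [hcol s t l, hcol s t l'])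
  have hrow : ∀ s, ∑ t, |∑ k, a s t k (p t) - ∑ k, a s t k (p (swap i j t))| ≤ 4 * (n * b) :=
    fun s => by
      refine (sum_le_add_of_eq_zero_of_ne (i := i) (j := j) (fun _ => abs_nonneg _)
        fun t hi hj => by simp [swap_apply_of_ne_of_ne hi hj]).trans ?_
      linarith [h2 s i (p i) (p (swap i j i)), h2 s j (p j) (p (swap i j j))]
  calc |dipMarginal a p - dipMarginal a (p * swap i j)|
      = |∑ s, ∑ t, (∑ k, a s t k (p t) - ∑ k, a s t k (p (swap i j t)))| := by
        simp only [dipMarginal, Perm.mul_apply, ← sum_sub_distrib]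
    _ ≤ ∑ s, ∑ t, |∑ k, a s t k (p t) - ∑ k, a s t k (p (swap i j t))| :=
        (abs_sum_le_sum_abs _ _).trans (sum_le_sum fun s _ => abs_sum_le_sum_abs _ _)
    _ ≤ ∑ _s : Fin n, 4 * (n * b) := sum_le_sum fun s _ => hrow s
    _ = 4 * n ^ 2 * b := by simp; ring

theorem sum_sum_abs_mul_abs_dipAntisymm_le {b : ℝ} (hb : ∀ i j k l, |a i j k l| ≤ b)
    (hn : 2 ≤ n) (p : Perm (Fin n)) :
    ∑ i, ∑ j, |dipStat a p - dipStat a (p * swap i j)| * |dipAntisymm a p (p * swap i j)|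
      ≤ 64 * n ^ 3 * b ^ 2 := by
  have hn' : (2 : ℝ) ≤ n := by exact_mod_cast hn
  have hb₀ : 0 ≤ b :=
    (abs_nonneg _).trans (hb ⟨0, by omega⟩ ⟨0, by omega⟩ ⟨0, by omega⟩ ⟨0, by omega⟩)
  have hF : ∀ i j, |dipAntisymm a p (p * swap i j)| ≤ 4 * n ^ 2 * b / (n * (n - 1)) := by
    intro i j
    have hpos : (0 : ℝ) < n * (n - 1) := by nlinarith
    rw [dipAntisymm, abs_div, abs_of_pos hpos]
    refine div_le_div_of_nonneg_right ?_ hpos.le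
    calc _ ≤ |n / 4 * (dipStat a p - dipStat a (p * swap i j))|
          + |(dipMarginal a p - dipMarginal a (p * swap i j)) / 2| := abs_add_le _ _
      _ = n / 4 * |dipStat a p - dipStat a (p * swap i j)|
          + |dipMarginal a p - dipMarginal a (p * swap i j)| / 2 := by
          rw [abs_mul, abs_of_nonneg (by positivity : (0 : ℝ) ≤ n / 4), abs_div, abs_two]
      _ ≤ n / 4 * (8 * n * b) + 4 * n ^ 2 * b / 2 := by
          gcongr
          exacts [abs_dipStat_sub_mul_swap_le hb p i j, abs_dipMarginal_sub_mul_swap_le hb p i j]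
      _ = 4 * n ^ 2 * b := by ring
  calc _ ≤ ∑ _i : Fin n, ∑ _j : Fin n, 8 * n * b * (4 * n ^ 2 * b / (n * (n - 1))) :=
        sum_le_sum fun i _ => sum_le_sum fun j _ =>
          mul_le_mul (abs_dipStat_sub_mul_swap_le hb p i j) (hF i j) (abs_nonneg _) (by positivity)
    _ = 32 * n ^ 4 * b ^ 2 / (n - 1) := by simp; field_simp; ring
    _ ≤ 64 * n ^ 3 * b ^ 2 := by
        rw [div_le_iff₀ (by linarith)]
        nlinarith [mul_nonneg (mul_nonneg (pow_nonneg (by linarith : (0 : ℝ) ≤ n) 3)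
          (sq_nonneg b)) (sub_nonneg.2 hn')]

theorem dipStat_tails_le {b : ℝ} (hdiag : ∀ i k l, a i i k l = 0)
    (hdiag' : ∀ i j k, a i j k k = 0)
    (hsymm : ∀ i j k l, a i j k l = a i j l k ∧ a i j k l = a j i l k)
    (hsum : ∑ i, ∑ j, ∑ k, ∑ l, a i j k l = 0) (hb : ∀ i j k l, |a i j k l| ≤ b) (hn : 2 ≤ n)
    {c : ℝ} (hc : 0 ≤ c) {K : ℝ} (hK : 64 * c ^ 2 * n ^ 3 * b ^ 2 ≤ K) {t : ℝ} (ht : 0 ≤ t) :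
    ((univ.filter fun p : Perm (Fin n) => t ≤ c * dipStat a p).card : ℝ) /
        Fintype.card (Perm (Fin n)) ≤ exp (-(t ^ 2 / (2 * K))) ∧
      ((univ.filter fun p : Perm (Fin n) => c * dipStat a p ≤ -t).card : ℝ) /
        Fintype.card (Perm (Fin n)) ≤ exp (-(t ^ 2 / (2 * K))) := by
  refine tails_le_of_exchangeable (σ := fun (x : Fin n × Fin n) p => p * swap x.1 x.2)
    (F := fun p q => c * dipAntisymm a p q) (fun x => mul_swap_mul_self x.1 x.2)
    (fun p q => by rw [dipAntisymm_comm, mul_neg]) (fun p => ?_) (fun p => ?_) ht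
  · rw [Fintype.sum_prod_type, ← sum_sum_dipAntisymm_mul_swap hdiag hdiag' hsymm hsum hn p]
    simp only [mul_sum]
  · calc _ = c ^ 2 * ∑ i, ∑ j,
          |dipStat a p - dipStat a (p * swap i j)| * |dipAntisymm a p (p * swap i j)| := by
          simp only [Fintype.sum_prod_type, mul_sum, ← mul_sub, abs_mul, abs_of_nonneg hc]
          exact sum_congr rfl fun _ _ => sum_congr rfl fun _ _ => by ring
      _ ≤ c ^ 2 * (64 * n ^ 3 * b ^ 2) := by
          gcongr; exact sum_sum_abs_mul_abs_dipAntisymm_le hb hn p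
      _ ≤ K := by linarith

end DoublyIndexed

theorem dips_concentration_general (n : ℕ) (b : ℝ)
    (a : Fin n → Fin n → Fin n → Fin n → ℝ)
    (hzero : ∀ i j k l, i = j ∨ k = l → a i j k l = 0)
    (hsum : ∑ i, ∑ j, ∑ k, ∑ l, a i j k l = 0)
    (hsymm : ∀ i j k l, a i j k l = a i j l k ∧ a i j k l = a j i l k)
    (hb : ∀ i j k l, |a i j k l| ≤ b)
    (W : Equiv.Perm (Fin n) → ℝ)
    (hW : ∀ p : Equiv.Perm (Fin n),
      W p = ((n : ℝ) * Real.sqrt n)⁻¹ * ∑ s, ∑ t ∈ univ \ {s}, a s t (p s) (p t))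
    (t : ℝ) (ht : 0 < t) :
    ((univ.filter (fun p : Equiv.Perm (Fin n) => t ≤ W p)).card : ℝ) /
        (Fintype.card (Equiv.Perm (Fin n)))
      ≤ Real.exp (-(t ^ 2 /
          (2 * (8 * (2 * (n : ℝ) - 1) * b ^ 2 * (6 + 4 / n + 1 / (n : ℝ) ^ 2) / n)))) ∧
    ((univ.filter (fun p : Equiv.Perm (Fin n) => W p ≤ -t)).card : ℝ) /
        (Fintype.card (Equiv.Perm (Fin n)))
      ≤ Real.exp (-(t ^ 2 /
          (2 * (8 * (2 * (n : ℝ) - 1) * b ^ 2 * (6 + 4 / n + 1 / (n : ℝ) ^ 2) / n)))) := by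
  have hdiag : ∀ i k l, a i i k l = 0 := fun i k l => hzero i i k l (Or.inl rfl)
  obtain rfl : W = fun p => ((n : ℝ) * √n)⁻¹ * dipStat a p :=
    funext fun p => by rw [hW, dipStat_eq_sum_sdiff hdiag]
  rcases lt_or_ge n 2 with hn | hn
  · simp [dipStat_eq_zero_of_le_one hdiag (Nat.lt_succ_iff.1 hn), not_le.2 ht, exp_nonneg]
  have hn' : (2 : ℝ) ≤ n := by exact_mod_cast hn
  refine dipStat_tails_le hdiag (fun i j k => hzero i j k k (Or.inr rfl)) hsymm hsum hb hn
    (by positivity) ?_ ht.le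
  have hc : ((n : ℝ) * √n)⁻¹ ^ 2 * n ^ 3 = 1 := by
    rw [inv_pow, mul_pow, sq_sqrt (Nat.cast_nonneg _)]
    field_simp
  rw [mul_assoc 64, hc, mul_one, le_div_iff₀ (by positivity)]
  field_simp
  have hpoly : 0 ≤ 4 * (n : ℝ) ^ 3 + 2 * n ^ 2 - 2 * n - 1 := by nlinarith
  nlinarith [mul_nonneg (sq_nonneg b) hpoly]

/-- Concentration of measure for doubly indexed permutation statistics:
for a bounded array `a` with the stated symmetries and zero total sum,
`W₁ = n^{-3/2} Σ_{s≠t} a_{s,t,π(s),π(t)}` (with `π` uniform on `S_n`) satisfies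
`P(W₁ ≥ t), P(W₁ ≤ -t) ≤ exp(-t²/(2 φ_{b,n}))` with
`φ_{b,n} = 8(2n-1)b²(6 + 4/n + 1/n²)/n`. -/
theorem dips_concentration (n : ℕ) (hn : 1 ≤ n) (b : ℝ)
    (a : Fin n → Fin n → Fin n → Fin n → ℝ)
    (hzero : ∀ i j k l, i = j ∨ k = l → a i j k l = 0)
    (hsum : ∑ i, ∑ j, ∑ k, ∑ l, a i j k l = 0)
    (hsymm : ∀ i j k l, a i j k l = a i j l k ∧ a i j k l = a j i l k)
    (hb : ∀ i j k l, |a i j k l| ≤ b)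
    (W : Equiv.Perm (Fin n) → ℝ)
    (hW : ∀ p : Equiv.Perm (Fin n),
      W p = ((n : ℝ) * Real.sqrt n)⁻¹ * ∑ s, ∑ t ∈ univ \ {s}, a s t (p s) (p t))
    (t : ℝ) (ht : 0 < t) :
    ((univ.filter (fun p : Equiv.Perm (Fin n) => t ≤ W p)).card : ℝ) /
        (Fintype.card (Equiv.Perm (Fin n)))
      ≤ Real.exp (-(t ^ 2 /
          (2 * (8 * (2 * (n : ℝ) - 1) * b ^ 2 * (6 + 4 / n + 1 / (n : ℝ) ^ 2) / n)))) ∧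
    ((univ.filter (fun p : Equiv.Perm (Fin n) => W p ≤ -t)).card : ℝ) /
        (Fintype.card (Equiv.Perm (Fin n)))
      ≤ Real.exp (-(t ^ 2 /
          (2 * (8 * (2 * (n : ℝ) - 1) * b ^ 2 * (6 + 4 / n + 1 / (n : ℝ) ^ 2) / n)))) :=
  dips_concentration_general n b a hzero hsum hsymm hb W hW t ht
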